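/- arXiv:1911.03187 — 4 statements merged into one kernel-verified Lean document; each statement's English description precedes it below -/
import Mathlib

section
/- For every α > −μ there exists a constant γ(α) > 0, independent of N, such that for every N ∈ ℕ with N ≥ 2 one has Σ_{k=1}^{N−1} 1/(ν_{k,N} + α) ≤ γ(α), where ν_{k,N} = μ·sin²(kπ/N)/sin²(π/N). -/
set_option maxHeartbeats 1000000


open Real Finset

noncomputable section

/-- The eigenvalues `ν_{k,N} = μ sin²(kπ/N)/sin²(π/N)` of the normalized discrete Laplacian. -/
def ν (μ : ℝ) (N k : ℕ) : ℝ := μ * Real.sin (k * π / N) ^ 2 / Real.sin (π / N) ^ 2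

lemma jordan_aux (N j : ℕ) (hN : 2 ≤ N) (hj : 1 ≤ j) (h2 : 2 * j ≤ N) :
    2 * (j : ℝ) / N ≤ Real.sin (j * π / N) := by
  have hN0 : (0 : ℝ) < N := by positivity
  have hx0 : (0 : ℝ) ≤ j * π / N := by positivity
  have hx2 : (j : ℝ) * π / N ≤ π / 2 := by
    rw [div_le_div_iff₀ hN0 (by norm_num)]
    have : (2 : ℝ) * j ≤ N := by exact_mod_cast h2
    nlinarith [Real.pi_pos]
  have h := Real.mul_le_sin hx0 hx2
  have hpi := Real.pi_pos
  calc 2 * (j : ℝ) / N = 2 / π * (j * π / N) := by field_simp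
    _ ≤ Real.sin (j * π / N) := h

lemma sin_mono_aux (N j : ℕ) (hN : 2 ≤ N) (hj : 1 ≤ j) (h2 : 2 * j ≤ N) :
    Real.sin (π / N) ≤ Real.sin (j * π / N) := by
  have hN0 : (0 : ℝ) < N := by positivity
  have hpi := Real.pi_pos
  have hx2 : (j : ℝ) * π / N ≤ π / 2 := by
    rw [div_le_div_iff₀ hN0 (by norm_num)]
    have : (2 : ℝ) * j ≤ N := by exact_mod_cast h2
    nlinarith
  refine Real.sin_le_sin_of_le_of_le_pi_div_two ?_ hx2 ?_
  · have h0 : (0:ℝ) < π / N := by positivity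
    linarith
  · have h1 : (1 : ℝ) ≤ j := by exact_mod_cast hj
    rw [div_le_div_iff₀ hN0 hN0]
    nlinarith [mul_pos hpi hN0]

/-- Uniform (in `N`) summability of the resolvent of the discrete Laplacian:
for every `α > −μ` there is `γ(α) > 0` with `∑_{k=1}^{N−1} 1/(ν_{k,N} + α) ≤ γ(α)` for all `N`. -/
theorem stmt_2 (μ : ℝ) (hμ : 1 < μ) (α : ℝ) (hα : -μ < α) :
    ∃ γ > 0, ∀ N : ℕ, 2 ≤ N → ∑ k ∈ Finset.Ico 1 N, 1 / (ν μ N k + α) ≤ γ := by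
  have hpi := Real.pi_pos
  set m : ℝ := min μ (μ + α) with hm
  have hm0 : 0 < m := lt_min (by linarith) (by linarith)
  refine ⟨π ^ 2 / m, by positivity, fun N hN => ?_⟩
  have hN0 : (0 : ℝ) < N := by positivity
  have hs0 : 0 < Real.sin (π / N) := by
    apply Real.sin_pos_of_pos_of_lt_pi (by positivity)
    rw [div_lt_iff₀ hN0]
    have h2 : (2:ℝ) ≤ N := by exact_mod_cast hN
    nlinarith
  have hsle : Real.sin (π / N) ≤ π / N := Real.sin_le (by positivity)
  -- pointwise bound
  have key : ∀ k ∈ Finset.Ico 1 N,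
      1 / (ν μ N k + α) ≤ π ^ 2 / (4 * m) * (((min k (N - k) : ℕ) : ℝ) ^ 2)⁻¹ := by
    intro k hk
    rw [Finset.mem_Ico] at hk
    obtain ⟨hk1, hkN⟩ := hk
    set j : ℕ := min k (N - k) with hj
    have hj1 : 1 ≤ j := le_min hk1 (by omega)
    have hj2 : 2 * j ≤ N := by omega
    have hjR : (0 : ℝ) < j := by exact_mod_cast hj1
    -- sin(kπ/N) = sin(jπ/N)
    have hsin : Real.sin (k * π / N) = Real.sin (j * π / N) := by
      rcases min_cases k (N - k) with ⟨h, _⟩ | ⟨h, hlt⟩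
      · rw [hj, h]
      · rw [hj, h]
        have hcast : ((N - k : ℕ) : ℝ) = (N : ℝ) - k := by
          push_cast [Nat.cast_sub hkN.le]; ring
        rw [hcast]
        have : ((N : ℝ) - k) * π / N = π - k * π / N := by field_simp
        rw [this, Real.sin_pi_sub]
    set t : ℝ := Real.sin (k * π / N) ^ 2 / Real.sin (π / N) ^ 2 with ht
    have hνt : ν μ N k = μ * t := by rw [ν, ht]; ring
    -- t ≥ 1
    have ht1 : 1 ≤ t := by
      rw [ht, le_div_iff₀ (by positivity), one_mul, hsin]
      have := sin_mono_aux N j hN hj1 hj2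
      nlinarith
    -- t ≥ 4 j² / π²
    have htj : 4 * (j : ℝ) ^ 2 / π ^ 2 ≤ t := by
      have h1 : 2 * (j : ℝ) / N ≤ Real.sin (j * π / N) := jordan_aux N j hN hj1 hj2
      rw [ht, hsin, le_div_iff₀ (by positivity), div_mul_eq_mul_div, div_le_iff₀ (by positivity)]
      have h2 : Real.sin (π / N) ^ 2 ≤ (π / N) ^ 2 := by nlinarith
      have h3 : (2 * (j : ℝ) / N) ^ 2 ≤ Real.sin (j * π / N) ^ 2 := by
        have : (0:ℝ) ≤ 2 * j / N := by positivity
        nlinarith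
      have h4 : 4 * (j : ℝ) ^ 2 * (π / N) ^ 2 = (2 * (j : ℝ) / N) ^ 2 * π ^ 2 := by
        field_simp; ring
      calc 4 * (j : ℝ) ^ 2 * Real.sin (π / N) ^ 2
          ≤ 4 * (j : ℝ) ^ 2 * (π / N) ^ 2 := by nlinarith
        _ = (2 * (j : ℝ) / N) ^ 2 * π ^ 2 := h4
        _ ≤ Real.sin (j * π / N) ^ 2 * π ^ 2 := by nlinarith
    -- ν + α ≥ m * t
    have hmt : m * t ≤ ν μ N k + α := by
      rw [hνt]
      rcases le_or_gt α 0 with h | h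
      · have : m ≤ μ + α := min_le_right _ _
        nlinarith
      · have : m ≤ μ := min_le_left _ _
        nlinarith
    have hpos : 0 < ν μ N k + α := lt_of_lt_of_le (by positivity) hmt
    have hlow : m * (4 * (j : ℝ) ^ 2 / π ^ 2) ≤ ν μ N k + α := by
      refine le_trans ?_ hmt
      have := htj
      nlinarith
    rw [div_le_iff₀ hpos]
    calc (1:ℝ) = π ^ 2 / (4 * m) * (((j:ℕ):ℝ) ^ 2)⁻¹ * (m * (4 * ((j:ℕ):ℝ) ^ 2 / π ^ 2)) := by
          have hm0' : m ≠ 0 := ne_of_gt hm0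
          have hπ0 : π ≠ 0 := ne_of_gt hpi
          have hj0 : ((j:ℕ):ℝ) ≠ 0 := ne_of_gt hjR
          field_simp
      _ ≤ π ^ 2 / (4 * m) * (((j:ℕ):ℝ) ^ 2)⁻¹ * (ν μ N k + α) :=
          mul_le_mul_of_nonneg_left hlow (by positivity)
  -- sum bound
  calc ∑ k ∈ Finset.Ico 1 N, 1 / (ν μ N k + α)
      ≤ ∑ k ∈ Finset.Ico 1 N, π ^ 2 / (4 * m) * (((min k (N - k) : ℕ) : ℝ) ^ 2)⁻¹ :=
        Finset.sum_le_sum key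
    _ = π ^ 2 / (4 * m) * ∑ k ∈ Finset.Ico 1 N, (((min k (N - k) : ℕ) : ℝ) ^ 2)⁻¹ := by
        rw [Finset.mul_sum]
    _ ≤ π ^ 2 / (4 * m) * 4 := by
        apply mul_le_mul_of_nonneg_left _ (by positivity)
        have step : ∀ k ∈ Finset.Ico 1 N,
            (((min k (N - k) : ℕ) : ℝ) ^ 2)⁻¹ ≤ ((k : ℝ) ^ 2)⁻¹ + (((N - k : ℕ) : ℝ) ^ 2)⁻¹ := by
          intro k hk
          rw [Finset.mem_Ico] at hk
          have h1 : 1 ≤ k := hk.1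
          have h2 : 1 ≤ N - k := by omega
          rcases min_cases k (N - k) with ⟨h, _⟩ | ⟨h, _⟩ <;> rw [h] <;>
            [skip; skip] <;>
            · have : (0:ℝ) < ((k:ℕ):ℝ)^2 := by positivity
              have : (0:ℝ) < (((N-k:ℕ)):ℝ)^2 := by
                have : (0:ℕ) < N - k := h2
                positivity
              first
                | exact le_add_of_nonneg_right (by positivity)
                | exact le_add_of_nonneg_left (by positivity)
        calc ∑ k ∈ Finset.Ico 1 N, (((min k (N - k) : ℕ) : ℝ) ^ 2)⁻¹
            ≤ ∑ k ∈ Finset.Ico 1 N, (((k : ℝ) ^ 2)⁻¹ + (((N - k : ℕ) : ℝ) ^ 2)⁻¹) :=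
              Finset.sum_le_sum step
          _ = (∑ k ∈ Finset.Ico 1 N, ((k : ℝ) ^ 2)⁻¹)
              + ∑ k ∈ Finset.Ico 1 N, (((N - k : ℕ) : ℝ) ^ 2)⁻¹ := Finset.sum_add_distrib
          _ = (∑ k ∈ Finset.Ico 1 N, ((k : ℝ) ^ 2)⁻¹)
              + ∑ k ∈ Finset.Ico 1 N, ((k : ℝ) ^ 2)⁻¹ := by
                congr 1
                apply Finset.sum_nbij' (fun k => N - k) (fun k => N - k)
                · intro k hk; rw [Finset.mem_Ico] at *; omega
                · intro k hk; rw [Finset.mem_Ico] at *; omega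
                · intro k hk; rw [Finset.mem_Ico] at hk; omega
                · intro k hk; rw [Finset.mem_Ico] at hk; omega
                · intro k hk; rfl
          _ ≤ 2 + 2 := by
              have : ∑ k ∈ Finset.Ico 1 N, ((k : ℝ) ^ 2)⁻¹ ≤ 2 := by
                have h := sum_Ioo_inv_sq_le (α := ℝ) 0 N
                simp only [Nat.cast_zero, zero_add, div_one] at h
                have : Finset.Ico 1 N = Finset.Ioo 0 N := rfl
                rw [this]
                exact_mod_cast h
              linarith
          _ = 4 := by norm_num
    _ = π ^ 2 / m := by field_simp
end
end

section
/- There exists a constant γ > 0 (one may take γ = γ(0) = sup_N Σ_{k=1}^{N−1} 1/ν_{k,N}) such that for all N ≥ 2 and all x ∈ ℝ^N, ⟨x, Kx⟩ ≥ (N/γ)·sup_k |x_k − x̄|², where x̄ is the average of x. -/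
open Real Finset

noncomputable section

/-- The normalized discrete Laplacian with periodic boundary conditions. -/
def Kd (μ : ℝ) (N : ℕ) (hN : N ≠ 0) (x : Fin N → ℝ) : Fin N → ℝ :=
  haveI : NeZero N := ⟨hN⟩
  fun k => μ / (4 * Real.sin (π / N) ^ 2) * (2 * x k - x (k + 1) - x (k - 1))

/-- The average `x̄` of a vector. -/
def avg (N : ℕ) (x : Fin N → ℝ) : ℝ := (∑ k, x k) / N

lemma shift_sum {N : ℕ} [NeZero N] (f : Fin N → ℝ) :
    ∑ j : Fin N, f (j + 1) = ∑ j : Fin N, f j :=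
  Fintype.sum_equiv (Equiv.addRight 1) (fun j => f (j + 1)) f (fun _ => rfl)

open Fin.NatCast in
lemma telescope {N : ℕ} [NeZero N] (x : Fin N → ℝ) (a : Fin N) (m : ℕ) :
    |x (a + (m : Fin N)) - x a| ≤
      ∑ i ∈ Finset.range m, |x (a + (i : Fin N) + 1) - x (a + (i : Fin N))| := by
  induction m with
  | zero => simp
  | succ m ih =>
    rw [Finset.sum_range_succ]
    have h1 : ((m + 1 : ℕ) : Fin N) = (m : Fin N) + 1 := by push_cast; ring
    rw [h1, ← add_assoc]
    calc |x (a + (m : Fin N) + 1) - x a|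
        ≤ |x (a + (m : Fin N) + 1) - x (a + (m : Fin N))| + |x (a + (m : Fin N)) - x a| :=
          abs_sub_le _ _ _
      _ ≤ _ := by linarith

open Fin.NatCast in
lemma diff_le {N : ℕ} [NeZero N] (x : Fin N → ℝ) (a b : Fin N) :
    |x b - x a| ≤ ∑ j : Fin N, |x (j + 1) - x j| := by
  have h1 := telescope x a (b - a).val
  rw [Fin.cast_val_eq_self] at h1
  have hab : a + (b - a) = b := by abel
  rw [hab] at h1
  have h2 : ∑ i ∈ Finset.range (b - a).val, |x (a + (i : Fin N) + 1) - x (a + (i : Fin N))|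
      ≤ ∑ i ∈ Finset.range N, |x (a + (i : Fin N) + 1) - x (a + (i : Fin N))| :=
    Finset.sum_le_sum_of_subset_of_nonneg
      (Finset.range_subset_range.mpr (le_of_lt (Fin.is_lt _))) (fun _ _ _ => abs_nonneg _)
  have h3 : ∑ i ∈ Finset.range N, |x (a + (i : Fin N) + 1) - x (a + (i : Fin N))|
      = ∑ j : Fin N, |x (a + j + 1) - x (a + j)| := by
    rw [← Fin.sum_univ_eq_sum_range (fun i => |x (a + (i : Fin N) + 1) - x (a + (i : Fin N))|) N]
    exact Finset.sum_congr rfl fun j _ => by rw [Fin.cast_val_eq_self]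
  have h4 : ∑ j : Fin N, |x (a + j + 1) - x (a + j)| = ∑ j : Fin N, |x (j + 1) - x j| :=
    Fintype.sum_equiv (Equiv.addLeft a) _ _ (fun _ => rfl)
  linarith

/-- Discrete Sobolev-type inequality: there is a constant `γ > 0`, independent of `N`, with
`⟨x, Kx⟩ ≥ (N/γ)·sup_k |x_k − x̄|²` for all `N ≥ 2` and all `x ∈ ℝ^N`. -/
theorem stmt_3 (μ : ℝ) (hμ : 1 < μ) :
    ∃ γ > 0, ∀ N : ℕ, ∀ hN : 2 ≤ N, ∀ x : Fin N → ℝ, ∀ k : Fin N,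
      ∑ j, x j * Kd μ N (by omega) x j ≥ (N / γ) * (x k - avg N x) ^ 2 := by
  refine ⟨4 * π ^ 2, by positivity, ?_⟩
  intro N hN x k
  haveI : NeZero N := ⟨by omega⟩
  have hNR : (2 : ℝ) ≤ (N : ℝ) := by exact_mod_cast hN
  have hN0 : (0 : ℝ) < N := by linarith
  set s := Real.sin (π / N) with hs_def
  set c := μ / (4 * s ^ 2) with hc_def
  -- positivity of sin
  have hπN : 0 < π / N := by positivity
  have hπN' : π / N < π := by
    rw [div_lt_iff₀ hN0]
    nlinarith [pi_pos]
  have hs : 0 < s := sin_pos_of_pos_of_lt_pi hπN hπN'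
  have hslt : s < π / N := sin_lt hπN
  -- sum identity
  have hA : ∑ j, x j * x (j - 1) = ∑ j, x (j + 1) * x j := by
    rw [← shift_sum (fun j => x j * x (j - 1))]
    exact Finset.sum_congr rfl fun j _ => by rw [add_sub_cancel_right]
  have hB : ∑ j, x (j + 1) * x (j + 1) = ∑ j, x j * x j :=
    shift_sum (fun j => x j * x j)
  have hsum : ∑ j, x j * (2 * x j - x (j + 1) - x (j - 1)) = ∑ j, (x (j + 1) - x j) ^ 2 := by
    have e : ∀ j : Fin N, x j * (2 * x j - x (j + 1) - x (j - 1)) =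
        (x (j + 1) - x j) ^ 2 + (x j * x j - x (j + 1) * x (j + 1)) +
          (x (j + 1) * x j - x j * x (j - 1)) := fun j => by ring
    rw [Finset.sum_congr rfl fun j _ => e j, Finset.sum_add_distrib, Finset.sum_add_distrib,
      Finset.sum_sub_distrib, Finset.sum_sub_distrib, hA, hB]
    ring
  have hL : ∑ j, x j * Kd μ N (by omega) x j = c * ∑ j, (x (j + 1) - x j) ^ 2 := by
    rw [← hsum, Finset.mul_sum]
    exact Finset.sum_congr rfl fun j _ => by simp only [Kd]; ring
  set D := ∑ j, (x (j + 1) - x j) ^ 2 with hD_def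
  set S := ∑ j, |x (j + 1) - x j| with hS_def
  have hD0 : 0 ≤ D := Finset.sum_nonneg fun _ _ => sq_nonneg _
  have hS0 : 0 ≤ S := Finset.sum_nonneg fun _ _ => abs_nonneg _
  -- Cauchy-Schwarz: S^2 ≤ N * D
  have hCS : S ^ 2 ≤ N * D := by
    have h := Finset.sum_mul_sq_le_sq_mul_sq Finset.univ (fun _ : Fin N => (1 : ℝ))
      (fun j => |x (j + 1) - x j|)
    simpa [sq_abs, Finset.card_univ] using h
  -- |x k - avg| ≤ S
  have havg : |x k - avg N x| ≤ S := by
    have h1 : x k - avg N x = (∑ j, (x k - x j)) / N := by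
      rw [avg, Finset.sum_sub_distrib, Finset.sum_const, Finset.card_univ, Fintype.card_fin,
        nsmul_eq_mul]
      field_simp
    rw [h1, abs_div, abs_of_pos hN0]
    rw [div_le_iff₀ hN0]
    calc |∑ j, (x k - x j)| ≤ ∑ j, |x k - x j| := Finset.abs_sum_le_sum_abs _ _
      _ ≤ ∑ _j : Fin N, S := Finset.sum_le_sum fun j _ => diff_le x j k
      _ = N * S := by rw [Finset.sum_const, Finset.card_univ, Fintype.card_fin, nsmul_eq_mul]
      _ = S * N := by ring
  have hk2 : (x k - avg N x) ^ 2 ≤ N * D := by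
    have h1 : (x k - avg N x) ^ 2 ≤ S ^ 2 := by
      rw [← sq_abs (x k - avg N x)]
      exact pow_le_pow_left₀ (abs_nonneg _) havg 2
    linarith
  -- c ≥ N^2 / (4π^2)
  have hc : (N : ℝ) ^ 2 / (4 * π ^ 2) ≤ c := by
    rw [hc_def, div_le_div_iff₀ (by positivity) (by positivity)]
    have hsN : s * N ≤ π := by
      have := (lt_div_iff₀ hN0).mp hslt
      linarith
    nlinarith [sq_nonneg s, mul_pos hs hN0, pi_pos]
  rw [hL, ge_iff_le]
  calc (N : ℝ) / (4 * π ^ 2) * (x k - avg N x) ^ 2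
      ≤ (N : ℝ) / (4 * π ^ 2) * (N * D) := by
        apply mul_le_mul_of_nonneg_left hk2 (by positivity)
    _ = (N : ℝ) ^ 2 / (4 * π ^ 2) * D := by ring
    _ ≤ c * D := mul_le_mul_of_nonneg_right hc hD0
end
end

section
/- For every μ > 1 and N ∈ ℕ, the function V_N(x) = Σ_k (1/4)(x_k² − 1)² + (1/2)⟨x, Kx⟩ on ℝ^N has exactly three critical points: the two global minimum points I₊ = (1,…,1) and I₋ = (−1,…,−1), and the origin O = (0,…,0). -/
open Real Finset

noncomputable section

/-- The double-well energy `V_N(x) = ∑ₖ (1/4)(xₖ²−1)² + (1/2)⟨x, Kx⟩`. -/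
def V (μ : ℝ) (N : ℕ) (hN : N ≠ 0) (x : Fin N → ℝ) : ℝ :=
  ∑ k, (1 / 4 : ℝ) * (x k ^ 2 - 1) ^ 2 + (1 / 2 : ℝ) * ∑ k, x k * Kd μ N hN x k

/-!
The gradient of `V` is `x ↦ (x_k³ - x_k + (Kx)_k)_k`. Pair a critical point `x` with `y = x - x̄`.
Since `t ↦ t³ - t` has derivative `≥ -1`, the cubic part contributes at least `-∑ y_k²`, while
`⟨y, Kx⟩ = ⟨x, Kx⟩ ≥ μ ∑ y_k²` by the Poincaré inequality. As `μ > 1` this forces `y = 0`, so `x`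
is a constant `a` with `a³ = a`. The Poincaré inequality is the discrete Wirtinger inequality
`∑ (y_{k+1} - y_k)² ≥ 4 sin²(π/N) ∑ y_k²` for `∑ y_k = 0`, which follows from Parseval on `ZMod N`:
the discrete Fourier transform turns the difference operator into multiplication of the `k`-th
coefficient by `e^{2πik/N} - 1`, of modulus `2 |sin (πk/N)|`, and kills the `0`-th coefficient.
Finally `V ≥ 0 = V(±1)` because `K` is positive semidefinite.
-/

section ShiftSums

variable {G R : Type*} [AddGroup G] [Fintype G] [CommRing R] (a : G)

theorem sum_second_diff_mul_comm (x v : G → R) :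
    ∑ k, (2 * x k - x (k + a) - x (k - a)) * v k
      = ∑ k, x k * (2 * v k - v (k + a) - v (k - a)) := by
  have h₁ : ∑ k, x (k + a) * v k = ∑ k, x k * v (k - a) := by
    simpa using (Equiv.sum_comp (Equiv.subRight a) (fun k => x (k + a) * v k)).symm
  have h₂ : ∑ k, x (k - a) * v k = ∑ k, x k * v (k + a) := by
    simpa using (Equiv.sum_comp (Equiv.addRight a) (fun k => x (k - a) * v k)).symm
  simp only [sub_mul, mul_sub, Finset.sum_sub_distrib, h₁, h₂, mul_assoc, mul_left_comm _ (2 : R)]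
  abel

theorem sum_mul_second_diff_self (x : G → R) :
    ∑ k, x k * (2 * x k - x (k + a) - x (k - a)) = ∑ k, (x (k + a) - x k) ^ 2 := by
  have h₁ : ∑ k, x k * x (k - a) = ∑ k, x (k + a) * x k := by
    simpa using (Equiv.sum_comp (Equiv.addRight a) (fun k => x k * x (k - a))).symm
  have h₂ : ∑ k, x (k + a) ^ 2 = ∑ k, x k ^ 2 := Equiv.sum_comp (Equiv.addRight a) (x · ^ 2)
  simp only [sub_sq, mul_sub, Finset.sum_sub_distrib, Finset.sum_add_distrib, h₁, h₂]
  simp only [mul_left_comm (x _) 2, mul_comm (x _) (x (_ + a)), mul_assoc, ← Finset.mul_sum, ← sq]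
  ring

end ShiftSums

theorem HasGradientAt.add {F : Type*} [NormedAddCommGroup F] [InnerProductSpace ℝ F]
    [CompleteSpace F] {f g : F → ℝ} {f' g' x : F} (hf : HasGradientAt f f' x)
    (hg : HasGradientAt g g' x) : HasGradientAt (fun y => f y + g y) (f' + g') x := by
  rw [hasGradientAt_iff_hasFDerivAt] at *
  rw [map_add]
  exact hf.add hg

theorem LinearMap.IsSymmetric.hasGradientAt_inner_self_div_two {F : Type*}
    [NormedAddCommGroup F] [InnerProductSpace ℝ F] [CompleteSpace F] {T : F →L[ℝ] F}
    (hT : (T : F →ₗ[ℝ] F).IsSymmetric) (x : F) :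
    HasGradientAt (fun y => inner ℝ (T y) y / 2) (T x) x := by
  rw [hasGradientAt_iff_hasFDerivAt]
  have hfun : (fun y => inner ℝ (T y) y / 2) = fun y => T.reApplyInnerSelf y * (1 / 2) := by
    ext y
    rw [ContinuousLinearMap.reApplyInnerSelf_apply, RCLike.re_to_real, div_eq_mul_one_div]
  rw [hfun]
  refine ((hT.hasStrictFDerivAt_reApplyInnerSelf x).hasFDerivAt.mul_const _).congr_fderiv ?_
  ext v
  simp

theorem EuclideanSpace.hasGradientAt_sum_comp {ι : Type*} [Fintype ι] {W W' : ℝ → ℝ}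
    (hW : ∀ t, HasDerivAt W (W' t) t) (x : EuclideanSpace ℝ ι) :
    HasGradientAt (fun y : EuclideanSpace ℝ ι => ∑ k, W (y k))
      (WithLp.toLp 2 fun k => W' (x k)) x := by
  rw [hasGradientAt_iff_hasFDerivAt]
  refine (HasFDerivAt.fun_sum (u := Finset.univ) fun k _ =>
    (hW (x k)).comp_hasFDerivAt x (EuclideanSpace.proj (𝕜 := ℝ) k).hasFDerivAt).congr_fderiv ?_
  ext v
  simp [PiLp.inner_apply, mul_comm]

namespace ZMod

open scoped ZMod

variable {N : ℕ} [NeZero N]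

theorem sum_norm_sq_dft (Φ : ZMod N → ℂ) : ∑ k, ‖𝓕 Φ k‖ ^ 2 = N * ∑ j, ‖Φ j‖ ^ 2 := by
  have conj_dft (k : ZMod N) :
      (starRingEnd ℂ) (𝓕 Φ k) = ∑ j, stdAddChar (j * k) * (starRingEnd ℂ) (Φ j) := by
    simp [dft_apply, ← AddChar.map_neg_eq_conj]
  have h : ∑ k, (starRingEnd ℂ) (𝓕 Φ k) * 𝓕 Φ k = N * ∑ j, (starRingEnd ℂ) (Φ j) * Φ j := by
    calc ∑ k, (starRingEnd ℂ) (𝓕 Φ k) * 𝓕 Φ k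
        = ∑ j, (starRingEnd ℂ) (Φ j) * 𝓕 (𝓕 Φ) (-j) := by
          simp only [conj_dft, Finset.sum_mul, dft_apply (𝓕 Φ), smul_eq_mul, Finset.mul_sum]
          rw [Finset.sum_comm]
          refine Finset.sum_congr rfl fun j _ => Finset.sum_congr rfl fun k _ => ?_
          rw [mul_neg, neg_neg, mul_comm k j]
          ring
      _ = N * ∑ j, (starRingEnd ℂ) (Φ j) * Φ j := by
          simp only [dft_dft, neg_neg, smul_eq_mul, Finset.mul_sum]
          exact Finset.sum_congr rfl fun j _ => by ring
  simp only [Complex.conj_mul'] at h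
  exact_mod_cast h

theorem dft_comp_add_apply (Φ : ZMod N → ℂ) (a k : ZMod N) :
    𝓕 (fun j => Φ (j + a)) k = stdAddChar (a * k) * 𝓕 Φ k := by
  simp only [dft_apply, smul_eq_mul, Finset.mul_sum]
  refine (Equiv.sum_comp (Equiv.subRight a) _).symm.trans (Finset.sum_congr rfl fun j _ => ?_)
  rw [Equiv.subRight_apply, sub_add_cancel, ← mul_assoc, ← AddChar.map_add_eq_mul]
  ring_nf

theorem norm_stdAddChar_sub_one (k : ZMod N) :
    ‖stdAddChar k - 1‖ = 2 * |Real.sin (π * k.val / N)| := by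
  have h := Complex.norm_exp_I_mul_ofReal_sub_one (2 * π * k.val / N)
  rw [stdAddChar_apply, toCircle_apply]
  push_cast at h
  rw [show 2 * π * Complex.I * k.val / N = Complex.I * (2 * π * k.val / N) by ring, h,
    norm_mul, Real.norm_eq_abs, Real.norm_eq_abs, abs_two]
  ring_nf

theorem sin_sq_le_sin_sq_val {k : ZMod N} (hk : k ≠ 0) :
    Real.sin (π / N) ^ 2 ≤ Real.sin (π * k.val / N) ^ 2 := by
  have hN : (0 : ℝ) < N := by exact_mod_cast NeZero.pos N
  have hk₁ : (1 : ℝ) ≤ k.val := by exact_mod_cast Nat.one_le_iff_ne_zero.2 ((val_ne_zero k).2 hk)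
  have hk₂ : (k.val : ℝ) + 1 ≤ N := by exact_mod_cast k.val_lt
  have hπN : π / N ≤ π - π / N := by
    rw [le_sub_iff_add_le, ← add_div, div_le_iff₀ hN]; nlinarith [pi_pos]
  have hmem : π * k.val / N ∈ Set.Icc (π / N) (π - π / N) := by
    constructor
    · exact div_le_div_of_nonneg_right (le_mul_of_one_le_right pi_pos.le hk₁) hN.le
    · rw [le_sub_iff_add_le, ← add_div, div_le_iff₀ hN]; nlinarith [pi_pos]
  have hπN₀ : 0 ≤ π / N := by positivity
  have hsin := strictConcaveOn_sin_Icc.concaveOn.min_le_of_mem_Icc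
    ⟨hπN₀, hπN.trans (by linarith)⟩ ⟨hπN₀.trans hπN, by linarith⟩ hmem
  rw [Real.sin_pi_sub, min_self] at hsin
  exact pow_le_pow_left₀ (Real.sin_nonneg_of_nonneg_of_le_pi hπN₀ (by linarith)) hsin 2

theorem four_mul_sin_sq_mul_sum_sq_le (y : ZMod N → ℝ) (hy : ∑ k, y k = 0) :
    4 * Real.sin (π / N) ^ 2 * ∑ k, y k ^ 2 ≤ ∑ k, (y (k + 1) - y k) ^ 2 := by
  set Φ : ZMod N → ℂ := fun k => y k
  have hdiff (k : ZMod N) : 𝓕 (fun j => Φ (j + 1) - Φ j) k = (stdAddChar k - 1) * 𝓕 Φ k := by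
    rw [show (fun j => Φ (j + 1) - Φ j) = (fun j => Φ (j + 1)) - Φ from rfl, map_sub,
      Pi.sub_apply, dft_comp_add_apply, one_mul, sub_one_mul]
  have hterm (k : ZMod N) :
      4 * Real.sin (π / N) ^ 2 * ‖𝓕 Φ k‖ ^ 2 ≤ ‖𝓕 (fun j => Φ (j + 1) - Φ j) k‖ ^ 2 := by
    by_cases hk : k = 0
    · simp only [hk, dft_apply_zero, Φ, ← Complex.ofReal_sum, hy, Complex.ofReal_zero, norm_zero]
      rw [zero_pow two_ne_zero, mul_zero]
      positivity
    · rw [hdiff, norm_mul, mul_pow, norm_stdAddChar_sub_one, mul_pow, sq_abs]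
      have hsin := sin_sq_le_sin_sq_val hk
      gcongr
      norm_num
  have hsum := Finset.sum_le_sum fun k (_ : k ∈ Finset.univ) => hterm k
  rw [← Finset.mul_sum, sum_norm_sq_dft, sum_norm_sq_dft] at hsum
  simp only [Φ, ← Complex.ofReal_sub, Complex.norm_real, Real.norm_eq_abs, sq_abs] at hsum
  have hN : (0 : ℝ) < N := by exact_mod_cast NeZero.pos N
  nlinarith

end ZMod

theorem Fin.four_mul_sin_sq_mul_sum_sq_le {N : ℕ} [NeZero N] (y : Fin N → ℝ)
    (hy : ∑ k, y k = 0) :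
    4 * Real.sin (π / N) ^ 2 * ∑ k, y k ^ 2 ≤ ∑ k, (y (k + 1) - y k) ^ 2 := by
  set e := (ZMod.finEquiv N).symm
  have h := ZMod.four_mul_sin_sq_mul_sum_sq_le (y ∘ e)
    ((Fintype.sum_equiv e.toEquiv _ _ fun _ => rfl).trans hy)
  simp only [Function.comp_apply, map_add, map_one] at h
  rwa [Fintype.sum_equiv e.toEquiv (fun k => y (e k) ^ 2) (y · ^ 2) fun _ => rfl,
    Fintype.sum_equiv e.toEquiv (fun k => (y (e k + 1) - y (e k)) ^ 2)
      (fun k => (y (k + 1) - y k) ^ 2) fun _ => rfl] at h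

theorem sum_sub_mean {N : ℕ} (hN : N ≠ 0) (x : Fin N → ℝ) : ∑ k, (x k - (∑ j, x j) / N) = 0 := by
  simp only [Finset.sum_sub_distrib, Finset.sum_const, Finset.card_univ, Fintype.card_fin,
    nsmul_eq_mul]
  field_simp
  ring

section Kd

variable {μ : ℝ} {N : ℕ} (hN : N ≠ 0)

theorem Kd_const (a : ℝ) : Kd μ N hN (fun _ => a) = 0 := by
  ext k; simp only [Kd, Pi.zero_apply]; ring

theorem Kd_add (x y : Fin N → ℝ) : Kd μ N hN (x + y) = Kd μ N hN x + Kd μ N hN y := by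
  ext k; simp only [Kd, Pi.add_apply]; ring

theorem Kd_smul (t : ℝ) (x : Fin N → ℝ) : Kd μ N hN (t • x) = t • Kd μ N hN x := by
  ext k; simp only [Kd, Pi.smul_apply, smul_eq_mul]; ring

theorem sum_Kd_mul_comm (x v : Fin N → ℝ) :
    ∑ k, Kd μ N hN x k * v k = ∑ k, x k * Kd μ N hN v k := by
  have : NeZero N := ⟨hN⟩
  simp only [Kd, mul_assoc, mul_left_comm (x _), ← Finset.mul_sum, sum_second_diff_mul_comm]

theorem sum_Kd (x : Fin N → ℝ) : ∑ k, Kd μ N hN x k = 0 := by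
  simpa [Kd_const] using sum_Kd_mul_comm (μ := μ) hN x fun _ => 1

theorem Kd_sub_const (x : Fin N → ℝ) (a : ℝ) : Kd μ N hN (fun k => x k - a) = Kd μ N hN x := by
  ext k; simp only [Kd]; ring

theorem sum_mul_Kd_self [NeZero N] (x : Fin N → ℝ) :
    ∑ k, x k * Kd μ N hN x k = μ / (4 * Real.sin (π / N) ^ 2) * ∑ k, (x (k + 1) - x k) ^ 2 := by
  simp only [Kd, mul_left_comm (x _), ← Finset.mul_sum, sum_mul_second_diff_self]

theorem mul_sum_sq_sub_mean_le (hμ : 0 ≤ μ) (x : Fin N → ℝ) :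
    μ * ∑ k, (x k - (∑ j, x j) / N) ^ 2 ≤ ∑ k, x k * Kd μ N hN x k := by
  have : NeZero N := ⟨hN⟩
  set y : Fin N → ℝ := fun k => x k - (∑ j, x j) / N
  have hy : ∑ k, y k = 0 := sum_sub_mean hN x
  have hxy : ∑ k, x k * Kd μ N hN x k = ∑ k, y k * Kd μ N hN y k := by
    simp only [y, Kd_sub_const, sub_mul, Finset.sum_sub_distrib, ← Finset.mul_sum, sum_Kd,
      mul_zero, sub_zero]
  rw [hxy, sum_mul_Kd_self]
  -- for `N = 1` the prefactor of `Kd` is the junk value `μ / 0 = 0`, but then `y = 0`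
  obtain rfl | hN₂ : N = 1 ∨ 2 ≤ N := by omega
  · simp only [Fin.sum_univ_one] at hy ⊢
    simp [hy]
  have hsin : 0 < Real.sin (π / N) := by
    refine Real.sin_pos_of_pos_of_lt_pi (by positivity) (div_lt_self pi_pos ?_)
    exact_mod_cast hN₂
  calc μ * ∑ k, y k ^ 2
      = μ / (4 * Real.sin (π / N) ^ 2) * (4 * Real.sin (π / N) ^ 2 * ∑ k, y k ^ 2) := by
        field_simp
    _ ≤ μ / (4 * Real.sin (π / N) ^ 2) * ∑ k, (y (k + 1) - y k) ^ 2 := by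
        gcongr
        exact Fin.four_mul_sin_sq_mul_sum_sq_le y hy

variable (μ) in
def KdCLM : EuclideanSpace ℝ (Fin N) →L[ℝ] EuclideanSpace ℝ (Fin N) :=
  LinearMap.toContinuousLinearMap
    { toFun := fun x => WithLp.toLp 2 (Kd μ N hN x)
      map_add' := fun x y => by simp [Kd_add]
      map_smul' := fun t x => by simp [Kd_smul] }

theorem KdCLM_apply (x : EuclideanSpace ℝ (Fin N)) :
    KdCLM μ hN x = WithLp.toLp 2 (Kd μ N hN x) :=
  rfl

theorem isSymmetric_KdCLM :
    (KdCLM μ hN : EuclideanSpace ℝ (Fin N) →ₗ[ℝ] EuclideanSpace ℝ (Fin N)).IsSymmetric :=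
  fun x y => by
    simp only [ContinuousLinearMap.coe_coe, KdCLM_apply, PiLp.inner_apply, Real.inner_apply]
    exact sum_Kd_mul_comm hN _ _

variable (μ) in
def gradV (x : Fin N → ℝ) : Fin N → ℝ := fun k => x k * (x k ^ 2 - 1) + Kd μ N hN x k

theorem hasGradientAt_V (x : EuclideanSpace ℝ (Fin N)) :
    HasGradientAt (fun y : EuclideanSpace ℝ (Fin N) => V μ N hN y)
      (WithLp.toLp 2 (gradV μ hN x)) x := by
  have hW (t : ℝ) : HasDerivAt (fun t => 1 / 4 * (t ^ 2 - 1) ^ 2) (t * (t ^ 2 - 1)) t := by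
    refine (((((hasDerivAt_id' t).fun_pow 2).sub_const 1).fun_pow 2).const_mul _).congr_deriv ?_
    push_cast
    ring
  convert (EuclideanSpace.hasGradientAt_sum_comp hW x).add
    ((isSymmetric_KdCLM (μ := μ) hN).hasGradientAt_inner_self_div_two x) using 1
  · ext y
    simp only [V, KdCLM_apply, PiLp.inner_apply, Real.inner_apply, mul_comm (Kd _ _ _ _ _)]
    ring
  · ext k
    simp [gradV, KdCLM_apply]

theorem eq_mean_of_gradV_eq_zero (hμ : 1 < μ) {x : Fin N → ℝ} (hx : gradV μ hN x = 0)
    (k : Fin N) : x k = (∑ j, x j) / N := by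
  set m := (∑ j, x j) / N
  -- `t ↦ t³ - t` has derivative `≥ -1`, i.e. `(t - m) (t³ - m³) ≥ 0`
  have hcubic (t : ℝ) :
      (t - m) * (m * (m ^ 2 - 1)) - (t - m) ^ 2 ≤ (t - m) * (t * (t ^ 2 - 1)) := by
    nlinarith [mul_nonneg (sq_nonneg (t - m)) (add_nonneg (sq_nonneg (t + m / 2)) (sq_nonneg m))]
  have hcubic_sum : -∑ k, (x k - m) ^ 2 ≤ ∑ k, (x k - m) * (x k * (x k ^ 2 - 1)) := by
    have h := Finset.sum_le_sum fun k (_ : k ∈ Finset.univ) => hcubic (x k)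
    have hm : ∑ k, (x k - m) = 0 := sum_sub_mean hN x
    rwa [Finset.sum_sub_distrib, ← Finset.sum_mul, hm, zero_mul, zero_sub] at h
  have hKd : ∑ k, (x k - m) * Kd μ N hN x k = ∑ k, x k * Kd μ N hN x k := by
    simp only [sub_mul, Finset.sum_sub_distrib, ← Finset.mul_sum, sum_Kd, mul_zero, sub_zero]
  have hpair : ∑ k, (x k - m) * gradV μ hN x k = 0 := by simp [hx]
  simp only [gradV, mul_add, Finset.sum_add_distrib] at hpair
  have hpoincare := mul_sum_sq_sub_mean_le (μ := μ) hN (by linarith) x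
  have hzero : ∑ k, (x k - m) ^ 2 = 0 :=
    le_antisymm (by nlinarith) (Finset.sum_nonneg fun _ _ => sq_nonneg _)
  have hk := (Finset.sum_eq_zero_iff_of_nonneg fun _ _ => sq_nonneg _).1 hzero k (mem_univ k)
  linarith [pow_eq_zero_iff two_ne_zero |>.1 hk]

theorem gradV_eq_zero_iff (hμ : 1 < μ) (x : Fin N → ℝ) :
    gradV μ hN x = 0 ↔ x = (fun _ => 1) ∨ x = (fun _ => -1) ∨ x = fun _ => 0 := by
  constructor
  · intro hx
    set m := (∑ j, x j) / N
    have hconst : x = fun _ => m := funext (eq_mean_of_gradV_eq_zero hN hμ hx)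
    have hm : m * ((m - 1) * (m + 1)) = 0 := by
      have h := congrFun hx ⟨0, Nat.pos_of_ne_zero hN⟩
      simp only [gradV, hconst, Kd_const, Pi.zero_apply, add_zero] at h
      linear_combination h
    rw [hconst]
    rcases mul_eq_zero.1 hm with h | h
    · simp [h]
    rcases mul_eq_zero.1 h with h | h
    · simp [sub_eq_zero.1 h]
    · simp [eq_neg_of_add_eq_zero_left h]
  · rintro (rfl | rfl | rfl) <;> ext k <;> simp [gradV, Kd_const]

theorem V_nonneg (hμ : 0 ≤ μ) (x : Fin N → ℝ) : 0 ≤ V μ N hN x := by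
  have hKd := (mul_nonneg hμ (Finset.sum_nonneg fun k _ => sq_nonneg _)).trans
    (mul_sum_sq_sub_mean_le hN hμ x)
  have hW := Finset.sum_nonneg fun k (_ : k ∈ Finset.univ) =>
    mul_nonneg (by norm_num : (0 : ℝ) ≤ 1 / 4) (sq_nonneg (x k ^ 2 - 1))
  unfold V
  linarith

theorem V_const_of_sq_eq_one {a : ℝ} (ha : a ^ 2 = 1) : V μ N hN (fun _ => a) = 0 := by
  simp [V, Kd_const, ha]

end Kd

/-- For `μ > 1`, `V_N` has exactly three critical points: the global minima
`I₊ = (1,…,1)`, `I₋ = (−1,…,−1)` and the origin. -/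
theorem stmt_6 (μ : ℝ) (hμ : 1 < μ) (N : ℕ) (hN : N ≠ 0) :
    ({x : EuclideanSpace ℝ (Fin N) | gradient (fun y : EuclideanSpace ℝ (Fin N) => V μ N hN y) x = 0}
        = {(WithLp.toLp 2 (fun _ => 1) : EuclideanSpace ℝ (Fin N)), WithLp.toLp 2 (fun _ => -1), WithLp.toLp 2 (fun _ => 0)}) ∧
    (∀ x : EuclideanSpace ℝ (Fin N), V μ N hN (fun _ => 1) ≤ V μ N hN x) ∧
    (∀ x : EuclideanSpace ℝ (Fin N), V μ N hN (fun _ => -1) ≤ V μ N hN x) := by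
  have hmin {a : ℝ} (ha : a ^ 2 = 1) (x : EuclideanSpace ℝ (Fin N)) :
      V μ N hN (fun _ => a) ≤ V μ N hN x :=
    (V_const_of_sq_eq_one hN ha).trans_le (V_nonneg hN (by linarith) x)
  refine ⟨Set.ext fun x => ?_, hmin (by norm_num), hmin (by norm_num)⟩
  rw [Set.mem_ofPred_eq, (hasGradientAt_V hN x).gradient, WithLp.toLp_eq_zero,
    gradV_eq_zero_iff hN hμ]
  simp only [Set.mem_insert_iff, Set.mem_singleton_iff, WithLp.ext_iff]
end
end

section
/- (Convexity around the minima) For every r > 1/√3 there exist constants α₀ = α₀(r) > 0 and C = C(r) > 0, independent of N, such that for all N ∈ ℕ and all x ∈ ℝ^N with |x̄| ≥ r and Σ_k (x_k − x̄)² ≤ N·α₀²·x̄², the Hessian of V_N at x satisfies Hess V_N(x) ≥ C (as a quadratic form on ℝ^N with the standard Euclidean norm). -/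
open Real Finset

noncomputable section

/-!
The Hessian form of `V_N` at `x` is `∑ (3xₖ² − 1) vₖ² + c_N ∑ (vₖ − vₖ₊₁)²` with
`c_N = μ / (4 sin²(π/N)) ≥ μN²/(4π²)`. Bounding `|vₖ − v̄|` by the total variation of `v` around
the cycle then gives the discrete Sobolev inequality `N (vₖ − v̄)² ≤ 4π² ⟨v, Kv⟩`.

For `|x̄| ≥ r > 1/√3` the weight `3xₖ² − 1` is at least `β = (3r² − 1)/2` at every site where `xₖ`
is within a small fraction `η` of `x̄`; by Chebyshev the remaining sites form a set `B` of size at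
most `N α₀²/η²`. There the weight is still `≥ −1`, and since `vₖ² ≤ 2v̄² + 2(vₖ − v̄)²` with
`N v̄² ≤ |v|²`, the mass of `v` on `B` is at most `(2|B|/N)(|v|² + 4π²⟨v, Kv⟩)`. For `α₀` small
this costs at most `β|v|²/2 + ⟨v, Kv⟩`, leaving `Hess V_N(x) ≥ β/2`.
-/

theorem sum_mul_two_mul_sub_sub_eq_sum_sq_sub {G : Type*} [AddCommGroup G] [Fintype G]
    (f : G → ℝ) (a : G) :
    ∑ g, f g * (2 * f g - f (g + a) - f (g - a)) = ∑ g, (f g - f (g + a)) ^ 2 := by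
  have hsq : ∑ g, f (g + a) ^ 2 = ∑ g, f g ^ 2 := Equiv.sum_comp (Equiv.addRight a) (f · ^ 2)
  have hmul : ∑ g, f g * f (g - a) = ∑ g, f g * f (g + a) := by
    rw [← Equiv.sum_comp (Equiv.addRight a)]
    simp [mul_comm]
  rw [← sub_eq_zero, ← sum_sub_distrib]
  calc ∑ g, (f g * (2 * f g - f (g + a) - f (g - a)) - (f g - f (g + a)) ^ 2)
      = ∑ g, (f g ^ 2 - f (g + a) ^ 2) + ∑ g, (f g * f (g + a) - f g * f (g - a)) := by
        rw [← sum_add_distrib]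
        exact sum_congr rfl fun g _ => by ring
    _ = 0 := by simp only [sum_sub_distrib, hsq, hmul, sub_self, add_zero]

section SumCompCLM

variable {E ι : Type*} [NormedAddCommGroup E] [NormedSpace ℝ E] [Fintype ι]
  (ℓ : ι → E →L[ℝ] ℝ) {g g' g'' : ι → ℝ → ℝ}

theorem hasFDerivAt_sum_comp_clm (hg : ∀ k t, HasDerivAt (g k) (g' k t) t) (y : E) :
    HasFDerivAt (fun y => ∑ k, g k (ℓ k y)) (∑ k, g' k (ℓ k y) • ℓ k) y :=
  HasFDerivAt.fun_sum fun k _ => (hg k (ℓ k y)).comp_hasFDerivAt y (ℓ k).hasFDerivAt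

theorem fderiv_fderiv_sum_comp_clm (hg : ∀ k t, HasDerivAt (g k) (g' k t) t)
    (hg' : ∀ k t, HasDerivAt (g' k) (g'' k t) t) (x v : E) :
    fderiv ℝ (fun y => fderiv ℝ (fun y => ∑ k, g k (ℓ k y)) y v) x v
      = ∑ k, g'' k (ℓ k x) * ℓ k v ^ 2 := by
  have hfirst : (fun y => fderiv ℝ (fun y => ∑ k, g k (ℓ k y)) y v)
      = fun y => ∑ k, g' k (ℓ k y) * ℓ k v := by
    ext y
    simp [(hasFDerivAt_sum_comp_clm ℓ hg y).fderiv]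
  rw [hfirst, (hasFDerivAt_sum_comp_clm ℓ (fun k t => (hg' k t).mul_const (ℓ k v)) x).fderiv]
  simp [sq, mul_assoc]

end SumCompCLM

def laplacianCoeff (μ : ℝ) (N : ℕ) : ℝ := μ / (4 * Real.sin (π / N) ^ 2)

def hessianV (μ : ℝ) (N : ℕ) [NeZero N] (x v : Fin N → ℝ) : ℝ :=
  ∑ k, (3 * x k ^ 2 - 1) * v k ^ 2 + laplacianCoeff μ N * ∑ k, (v k - v (k + 1)) ^ 2

section
variable (μ : ℝ) {N : ℕ} [NeZero N] (hN : N ≠ 0)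

theorem V_eq_sum (y : Fin N → ℝ) :
    V μ N hN y = ∑ k, (1 / 4 : ℝ) * (y k ^ 2 - 1) ^ 2
      + laplacianCoeff μ N / 2 * ∑ k, (y k - y (k + 1)) ^ 2 := by
  simp only [V, Kd]
  rw [← sum_mul_two_mul_sub_sub_eq_sum_sq_sub, laplacianCoeff, mul_sum, mul_sum]
  congr 1
  exact sum_congr rfl fun k _ => by ring

theorem fderiv_fderiv_V (x v : Fin N → ℝ) :
    fderiv ℝ (fun y => fderiv ℝ (V μ N hN) y v) x v = hessianV μ N x v := by
  set c := laplacianCoeff μ N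
  -- `V` is a sum of one-variable functions of the linear forms `yₖ` and `yₖ − yₖ₊₁`.
  let ℓ : Fin N ⊕ Fin N → (Fin N → ℝ) →L[ℝ] ℝ :=
    Sum.elim (fun k => .proj k) (fun k => .proj k - .proj (k + 1))
  let g : Fin N ⊕ Fin N → ℝ → ℝ :=
    Sum.elim (fun _ t => 1 / 4 * (t ^ 2 - 1) ^ 2) (fun _ t => c / 2 * t ^ 2)
  let g' : Fin N ⊕ Fin N → ℝ → ℝ := Sum.elim (fun _ t => (t ^ 2 - 1) * t) (fun _ t => c * t)
  let g'' : Fin N ⊕ Fin N → ℝ → ℝ := Sum.elim (fun _ t => 3 * t ^ 2 - 1) (fun _ _ => c)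
  have hV : V μ N hN = fun y => ∑ i, g i (ℓ i y) := by
    ext y
    simp [V_eq_sum, Fintype.sum_sum_type, mul_sum, g, ℓ, c]
  have hg : ∀ i t, HasDerivAt (g i) (g' i t) t := by
    rintro (_ | _) t <;> dsimp only [g, g', Sum.elim_inl, Sum.elim_inr]
    · exact ((((hasDerivAt_pow 2 t).sub_const 1).fun_pow 2).const_mul _).congr_deriv (by ring)
    · exact ((hasDerivAt_pow 2 t).const_mul _).congr_deriv (by ring)
  have hg' : ∀ i t, HasDerivAt (g' i) (g'' i t) t := by
    rintro (_ | _) t <;> dsimp only [g', g'', Sum.elim_inl, Sum.elim_inr]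
    · exact (((hasDerivAt_pow 2 t).sub_const 1).fun_mul (hasDerivAt_id' t)).congr_deriv (by ring)
    · exact ((hasDerivAt_id' t).const_mul c).congr_deriv (mul_one c)
  rw [hV, fderiv_fderiv_sum_comp_clm ℓ hg hg']
  simp [hessianV, Fintype.sum_sum_type, mul_sum, g'', ℓ, c]

end

section Sobolev
variable {N : ℕ} [NeZero N]

open Fin.NatCast in
theorem abs_sub_le_sum_abs_sub_succ (v : Fin N → ℝ) (k j : Fin N) :
    |v k - v j| ≤ ∑ p, |v p - v (p + 1)| := by
  have hpath : ∀ m : ℕ, |v k - v (k + m)| ≤ ∑ i ∈ range m, |v (k + i) - v (k + i + 1)| := by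
    intro m
    induction m with
    | zero => simp
    | succ m ih =>
      rw [sum_range_succ, Nat.cast_succ, ← add_assoc]
      exact (abs_sub_le _ _ _).trans (by gcongr)
  calc |v k - v j| = |v k - v (k + (j - k).val)| := by rw [Fin.cast_val_eq_self, add_sub_cancel]
    _ ≤ ∑ i ∈ range (j - k).val, |v (k + i) - v (k + i + 1)| := hpath _
    _ ≤ ∑ i ∈ range N, |v (k + i) - v (k + i + 1)| :=
      sum_le_sum_of_subset_of_nonneg (range_subset_range.2 (j - k).isLt.le)
        fun _ _ _ => abs_nonneg _
    _ = ∑ p : Fin N, |v (k + p) - v (k + p + 1)| := by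
      rw [← Fin.sum_univ_eq_sum_range (fun i => |v (k + i) - v (k + i + 1)|)]
      simp only [Fin.cast_val_eq_self]
    _ = ∑ p, |v p - v (p + 1)| := Equiv.sum_comp (Equiv.addLeft k) (fun p => |v p - v (p + 1)|)

theorem sq_sub_avg_le (v : Fin N → ℝ) (k : Fin N) :
    (v k - avg N v) ^ 2 ≤ N * ∑ p, (v p - v (p + 1)) ^ 2 := by
  set L := ∑ p, |v p - v (p + 1)|
  have hN : (0 : ℝ) < N := by simp [Nat.pos_of_neZero]
  have hcenter : v k - avg N v = (∑ j, (v k - v j)) / N := by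
    simp only [avg, sum_sub_distrib, sum_const, card_univ, Fintype.card_fin, nsmul_eq_mul]
    field_simp
  have habs : |v k - avg N v| ≤ L := by
    rw [hcenter, abs_div, abs_of_pos hN, div_le_iff₀ hN]
    calc |∑ j, (v k - v j)| ≤ ∑ j, |v k - v j| := abs_sum_le_sum_abs _ _
      _ ≤ ∑ _j : Fin N, L := sum_le_sum fun j _ => abs_sub_le_sum_abs_sub_succ v k j
      _ = L * N := by simp [mul_comm]
  calc (v k - avg N v) ^ 2 ≤ L ^ 2 := sq_le_sq' (abs_le.1 habs).1 (abs_le.1 habs).2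
    _ ≤ N * ∑ p, |v p - v (p + 1)| ^ 2 := by
      simpa using sq_sum_le_card_mul_sum_sq (s := univ) (f := fun p => |v p - v (p + 1)|)
    _ = N * ∑ p, (v p - v (p + 1)) ^ 2 := by simp only [sq_abs]

theorem mul_sq_le_laplacianCoeff {μ : ℝ} (hμ : 0 ≤ μ) (hN : 2 ≤ N) :
    μ * N ^ 2 ≤ 4 * π ^ 2 * laplacianCoeff μ N := by
  have hN0 : (0 : ℝ) < N := by simp [Nat.pos_of_neZero]
  have hsin : 0 < sin (π / N) := by
    apply sin_pos_of_pos_of_lt_pi (by positivity)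
    rw [div_lt_iff₀ hN0]
    nlinarith [pi_pos, show (2 : ℝ) ≤ N by exact_mod_cast hN]
  have hNsin : N * sin (π / N) ≤ π := by
    calc N * sin (π / N) ≤ N * (π / N) := by gcongr; exact sin_le (by positivity)
      _ = π := by field_simp
  rw [laplacianCoeff, ← mul_div_assoc, le_div_iff₀ (by positivity)]
  calc μ * N ^ 2 * (4 * sin (π / N) ^ 2) = 4 * μ * (N * sin (π / N)) ^ 2 := by ring
    _ ≤ 4 * μ * π ^ 2 := by gcongr
    _ = 4 * π ^ 2 * μ := by ring

theorem mul_sq_sub_avg_le {μ : ℝ} (hμ : 1 ≤ μ) (v : Fin N → ℝ) (k : Fin N) :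
    N * (v k - avg N v) ^ 2 ≤ 4 * π ^ 2 * (laplacianCoeff μ N * ∑ p, (v p - v (p + 1)) ^ 2) := by
  set S := ∑ p, (v p - v (p + 1)) ^ 2
  have hS : 0 ≤ S := by positivity
  have hsq : N * (v k - avg N v) ^ 2 ≤ N ^ 2 * S := by
    calc N * (v k - avg N v) ^ 2 ≤ N * (N * S) := by gcongr; exact sq_sub_avg_le v k
      _ = N ^ 2 * S := by ring
  rcases (Nat.one_le_iff_ne_zero.2 (NeZero.ne N)).eq_or_lt with hN1 | hN2
  · -- `laplacianCoeff μ 1` is the junk value `μ / 0 = 0`, but for `N = 1` all differences vanish.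
    subst hN1
    have : S = 0 := by simp [S]
    simpa [this] using hsq
  · calc N * (v k - avg N v) ^ 2 ≤ N ^ 2 * S := hsq
      _ = 1 * N ^ 2 * S := by ring
      _ ≤ μ * N ^ 2 * S := by gcongr
      _ ≤ 4 * π ^ 2 * laplacianCoeff μ N * S :=
        mul_le_mul_of_nonneg_right (mul_sq_le_laplacianCoeff (zero_le_one.trans hμ) hN2) hS
      _ = _ := by ring

end Sobolev

theorem le_three_mul_sq_sub_one {β a t : ℝ} (hβ : 0 ≤ β) (ha : 1 + 2 * β ≤ 3 * a ^ 2)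
    (ht : (t - a) ^ 2 < (β / (2 * (1 + 2 * β)) * a) ^ 2) : β ≤ 3 * t ^ 2 - 1 := by
  set η := β / (2 * (1 + 2 * β))
  have hη : 0 ≤ η := by positivity
  have hη4 : η ≤ 1 / 4 := by
    rw [div_le_iff₀ (by positivity)]; linarith
  have hdist : |t - a| ≤ η * |a| := by
    rw [← abs_of_nonneg hη, ← abs_mul]; exact (sq_lt_sq.1 ht).le
  have habs : (1 - η) * |a| ≤ |t| := by
    have := abs_sub_abs_le_abs_sub a t
    rw [abs_sub_comm] at this
    linarith
  have hsq : (1 - η) ^ 2 * a ^ 2 ≤ t ^ 2 := by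
    rw [← sq_abs t, ← sq_abs a, ← mul_pow]
    exact pow_le_pow_left₀ (by nlinarith [abs_nonneg a]) habs 2
  have hη_eq : 2 * η * (1 + 2 * β) = β := by
    simp only [η]; field_simp
  nlinarith [sq_nonneg η, sq_nonneg a]

theorem card_mul_sq_le_of_sum_sq_sub_avg_le {N : ℕ} {β α : ℝ} (hβ : 0 ≤ β) {x : Fin N → ℝ}
    (ha : 1 + 2 * β ≤ 3 * avg N x ^ 2)
    (hvar : ∑ k, (x k - avg N x) ^ 2 ≤ N * α ^ 2 * avg N x ^ 2) :
    #{k | 3 * x k ^ 2 - 1 < β} * (β / (2 * (1 + 2 * β))) ^ 2 ≤ N * α ^ 2 := by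
  set a := avg N x
  set η := β / (2 * (1 + 2 * β))
  have ha2 : 0 < a ^ 2 := by nlinarith
  have hbad : ∀ k ∈ ({k | 3 * x k ^ 2 - 1 < β} : Finset (Fin N)), (η * a) ^ 2 ≤ (x k - a) ^ 2 :=
    fun k hk => not_lt.1 fun h => (not_le.2 (mem_filter.1 hk).2) (le_three_mul_sq_sub_one hβ ha h)
  have hcheb : #{k | 3 * x k ^ 2 - 1 < β} * (η * a) ^ 2 ≤ ∑ k, (x k - a) ^ 2 :=
    calc _ = #{k | 3 * x k ^ 2 - 1 < β} • (η * a) ^ 2 := (nsmul_eq_mul _ _).symm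
      _ ≤ ∑ k ∈ {k | 3 * x k ^ 2 - 1 < β}, (x k - a) ^ 2 := card_nsmul_le_sum _ _ _ hbad
      _ ≤ ∑ k, (x k - a) ^ 2 :=
        sum_le_sum_of_subset_of_nonneg (subset_univ _) fun _ _ _ => sq_nonneg _
  refine le_of_mul_le_mul_right ?_ ha2
  nlinarith

section Coercivity
variable {N : ℕ} [NeZero N]

theorem mul_avg_sq_le_sum_sq (v : Fin N → ℝ) : N * avg N v ^ 2 ≤ ∑ k, v k ^ 2 := by
  have hN : (0 : ℝ) < N := by simp [Nat.pos_of_neZero]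
  have hcs : (∑ k, v k) ^ 2 ≤ N * ∑ k, v k ^ 2 := by
    simpa using sq_sum_le_card_mul_sum_sq (s := univ) (f := v)
  rw [avg, div_pow, mul_div_assoc', div_le_iff₀ (by positivity)]
  nlinarith

theorem mul_sum_sq_le_of_mul_sq_sub_avg_le {v : Fin N → ℝ} {C : ℝ}
    (hC : ∀ k, N * (v k - avg N v) ^ 2 ≤ C) (s : Finset (Fin N)) :
    N * ∑ k ∈ s, v k ^ 2 ≤ 2 * #s * (∑ k, v k ^ 2 + C) := by
  have hpoint : ∀ k, N * v k ^ 2 ≤ 2 * (∑ k, v k ^ 2 + C) := fun k => by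
    nlinarith [hC k, mul_avg_sq_le_sum_sq v, sq_nonneg (v k - 2 * avg N v),
      show (0 : ℝ) ≤ N from Nat.cast_nonneg N]
  calc N * ∑ k ∈ s, v k ^ 2 = ∑ k ∈ s, N * v k ^ 2 := mul_sum _ _ _
    _ ≤ ∑ _k ∈ s, 2 * (∑ k, v k ^ 2 + C) := sum_le_sum fun k _ => hpoint k
    _ = 2 * #s * (∑ k, v k ^ 2 + C) := by rw [sum_const, nsmul_eq_mul]; ring

theorem half_mul_sum_sq_le_sum_mul_sq_add {w v : Fin N → ℝ} {β γ T : ℝ} (hβ : 0 < β)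
    (hT : 0 ≤ T) (hw : ∀ k, -1 ≤ w k) (hv : ∀ k, N * (v k - avg N v) ^ 2 ≤ γ * T)
    (hBγ : 2 * (β + 1) * γ * #{k | w k < β} ≤ N) (hBβ : 4 * (β + 1) * #{k | w k < β} ≤ β * N) :
    β / 2 * ∑ k, v k ^ 2 ≤ ∑ k, w k * v k ^ 2 + T := by
  set B : Finset (Fin N) := {k | w k < β}
  set A := ∑ k, v k ^ 2
  set SB := ∑ k ∈ B, v k ^ 2
  have hN : (0 : ℝ) < N := by simp [Nat.pos_of_neZero]
  have hA : 0 ≤ A := by positivity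
  have hsplit : β * A - (β + 1) * SB ≤ ∑ k, w k * v k ^ 2 := by
    have hbad : -SB ≤ ∑ k ∈ B, w k * v k ^ 2 := by
      rw [← sum_neg_distrib]
      exact sum_le_sum fun k _ => by nlinarith [hw k, sq_nonneg (v k)]
    have hgood : β * ∑ k ∈ univ.filter (¬ w · < β), v k ^ 2
        ≤ ∑ k ∈ univ.filter (¬ w · < β), w k * v k ^ 2 := by
      rw [mul_sum]
      exact sum_le_sum fun k hk => by
        have := not_lt.1 (mem_filter.1 hk).2
        nlinarith [sq_nonneg (v k)]
    have hAsplit := sum_filter_add_sum_filter_not univ (w · < β) (fun k => v k ^ 2)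
    have hWsplit := sum_filter_add_sum_filter_not univ (w · < β) (fun k => w k * v k ^ 2)
    nlinarith
  have hsmall := mul_sum_sq_le_of_mul_sq_sub_avg_le hv B
  have hbound : N * ((β + 1) * SB) ≤ N * (β / 2 * A + T) := by
    have h1 := mul_le_mul_of_nonneg_right hBβ (by positivity : 0 ≤ A / 2)
    have h2 := mul_le_mul_of_nonneg_right hBγ hT
    nlinarith
  nlinarith [le_of_mul_le_mul_left hbound hN]

end Coercivity

theorem half_mul_sum_sq_le_hessianV {μ β : ℝ} {N : ℕ} [NeZero N] (hμ : 1 ≤ μ) (hβ : 0 < β)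
    (x v : Fin N → ℝ)
    (hcard : #{k | 3 * x k ^ 2 - 1 < β} * ((β + 1) * max (8 * π ^ 2) (4 / β)) ≤ N) :
    β / 2 * ∑ k, v k ^ 2 ≤ hessianV μ N x v := by
  set B : Finset (Fin N) := {k | 3 * x k ^ 2 - 1 < β}
  refine half_mul_sum_sq_le_sum_mul_sq_add hβ ?_ (fun k => by nlinarith [sq_nonneg (x k)])
    (mul_sq_sub_avg_le hμ v) ?_ ?_
  · exact mul_nonneg (div_nonneg (by linarith) (by positivity)) (by positivity)
  · calc 2 * (β + 1) * (4 * π ^ 2) * #B = #B * ((β + 1) * (8 * π ^ 2)) := by ring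
      _ ≤ #B * ((β + 1) * max (8 * π ^ 2) (4 / β)) := by gcongr; exact le_max_left _ _
      _ ≤ N := hcard
  · calc 4 * (β + 1) * #B = β * (#B * ((β + 1) * (4 / β))) := by field_simp
      _ ≤ β * (#B * ((β + 1) * max (8 * π ^ 2) (4 / β))) := by gcongr; exact le_max_right _ _
      _ ≤ β * N := by gcongr

/-- Convexity of `V_N` around the minima: for every `r > 1/√3` there are `α₀, C > 0`,
independent of `N`, such that `Hess V_N(x) ≥ C` (as a quadratic form w.r.t. the Euclidean
norm) whenever `|x̄| ≥ r` and `∑ₖ(xₖ − x̄)² ≤ N α₀² x̄²`. -/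
theorem stmt_7 (μ : ℝ) (hμ : 1 < μ) (r : ℝ) (hr : 1 / Real.sqrt 3 < r) :
    ∃ α₀ > 0, ∃ C > 0, ∀ N : ℕ, ∀ hN : N ≠ 0, ∀ x : Fin N → ℝ,
      r ≤ |avg N x| →
      ∑ k, (x k - avg N x) ^ 2 ≤ N * α₀ ^ 2 * avg N x ^ 2 →
      ∀ v : Fin N → ℝ,
        fderiv ℝ (fun y => fderiv ℝ (V μ N hN) y v) x v ≥ C * ∑ i, v i ^ 2 := by
  have hr0 : 0 < r := lt_trans (by positivity) hr
  have hr2 : 1 < 3 * r ^ 2 := by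
    have := pow_lt_pow_left₀ hr (by positivity) two_ne_zero
    rw [div_pow, one_pow, sq_sqrt zero_le_three, div_lt_iff₀ zero_lt_three] at this
    linarith
  set β := (3 * r ^ 2 - 1) / 2
  have hβ : 0 < β := by simp only [β]; linarith
  set η := β / (2 * (1 + 2 * β))
  set K := (β + 1) * max (8 * π ^ 2) (4 / β)
  have hK : 0 < K := by positivity
  have hα : (η / √K) ^ 2 * K = η ^ 2 := by rw [div_pow, sq_sqrt hK.le, div_mul_cancel₀ _ hK.ne']
  refine ⟨η / √K, by positivity, β / 2, by positivity, fun N hN x hrx hvar v => ?_⟩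
  have : NeZero N := ⟨hN⟩
  have ha : 1 + 2 * β ≤ 3 * avg N x ^ 2 := by
    have := pow_le_pow_left₀ hr0.le hrx 2
    rw [sq_abs] at this
    simp only [β]; linarith
  have hcard : #{k | 3 * x k ^ 2 - 1 < β} * K ≤ N := by
    have h := mul_le_mul_of_nonneg_right (card_mul_sq_le_of_sum_sq_sub_avg_le hβ.le ha hvar) hK.le
    refine le_of_mul_le_mul_right ?_ (by positivity : 0 < η ^ 2)
    nlinarith
  rw [ge_iff_le, fderiv_fderiv_V]
  exact half_mul_sum_sq_le_hessianV hμ.le hβ x v hcard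
end
end
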